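/- Let A ⊆ B be C*-algebras and E : B → A a conditional expectation that is multiplicative on [ABA] and has ker E = {0}. Realize A ⊆ B(H) nondegenerately and let E(x) = V*π(x)V be a minimal Stinespring decomposition, with π a representation of B on K and V : H → K with [π(B)VH] = K. Then V is an isometry and VV* equals the projection P onto [π(A)K]. -/

import Mathlib

/-!
The bimodule property alone gives `V⋆π(a) = σ(a)V⋆` on the dense set `π(B)VH`, hence
`Vσ(a) = π(a)V`; together with `σ(a) = V⋆π(a)V` and nondegeneracy this makes `V` an isometry
with range in `[π(A)K]`. Multiplicativity of `E` on `[ABA]` forces `E(d⋆d) = 0` for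
`d = ax - E(ax)`, so `π(ax)V = π(E(ax))V`, and then `VV⋆π(a)π(x)Vξ = Vσ(E(ax))ξ = π(ax)Vξ`:
`VV⋆` fixes `[π(A)K]`.
-/

open scoped ComplexOrder

variable {B : Type*} [NonUnitalNormedRing B] [StarRing B] [CStarRing B]
  [NormedSpace ℂ B] [IsScalarTower ℂ B B] [SMulCommClass ℂ B B] [StarModule ℂ B]
  [CompleteSpace B] [PartialOrder B] [StarOrderedRing B]
  {H K : Type*} [NormedAddCommGroup H] [InnerProductSpace ℂ H] [CompleteSpace H]
  [NormedAddCommGroup K] [InnerProductSpace ℂ K] [CompleteSpace K]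

/-- The hereditary subalgebra `[ABA]` generated by `A` in `B`. -/
def hereditarySpan (A : NonUnitalStarSubalgebra ℂ B) : Set B :=
  closure (Submodule.span ℂ {z : B | ∃ a ∈ A, ∃ b ∈ A, ∃ x : B, z = a * x * b} : Set B)

open ContinuousLinearMap

section CStarRing

variable {R : Type*} [NonUnitalNormedRing R] [StarRing R] [CStarRing R]

lemma IsSelfAdjoint.eq_zero_of_mul_self_eq_zero {t : R} (ht : IsSelfAdjoint t)
    (h : t * t = 0) : t = 0 :=
  (CStarRing.star_mul_self_eq_zero_iff t).mp (by rwa [ht.star_eq])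

lemma IsSelfAdjoint.eq_zero_of_mul_self_mul_mul_self_eq_zero {t : R} (ht : IsSelfAdjoint t)
    (h : t * t * t * (t * t) = 0) : t = 0 := by
  have hsq : IsSelfAdjoint (t * t) := (ht.commute_iff ht).mp (.refl t)
  have h8 : t * t * (t * t) * (t * t * (t * t)) = 0 := by
    rw [show t * t * (t * t) * (t * t * (t * t)) = t * t * t * (t * t) * (t * (t * t)) by
      simp only [mul_assoc], h, zero_mul]
  exact ht.eq_zero_of_mul_self_eq_zero <| hsq.eq_zero_of_mul_self_eq_zero <|
    ((hsq.commute_iff hsq).mp (.refl _)).eq_zero_of_mul_self_eq_zero h8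

end CStarRing

section HereditarySpan

variable {R : Type*} [NonUnitalNormedRing R] [StarRing R] [NormedSpace ℂ R]

lemma mul_mul_mem_hereditarySpan (A : NonUnitalStarSubalgebra ℂ R) {a b : R} (ha : a ∈ A)
    (hb : b ∈ A) (x : R) : a * x * b ∈ hereditarySpan A :=
  subset_closure (Submodule.subset_span ⟨a, ha, b, hb, x, rfl⟩)

lemma sub_mem_hereditarySpan (A : NonUnitalStarSubalgebra ℂ R) {x y : R}
    (hx : x ∈ hereditarySpan A) (hy : y ∈ hereditarySpan A) : x - y ∈ hereditarySpan A := by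
  unfold hereditarySpan at hx hy ⊢
  rw [← Submodule.topologicalClosure_coe] at hx hy ⊢
  exact sub_mem hx hy

end HereditarySpan

section ConditionalExpectation

variable {R : Type*} [NonUnitalNormedRing R] [StarRing R] [CStarRing R] [NormedSpace ℂ R]
  [PartialOrder R] [StarOrderedRing R]

/-- For `d := ax - E(ax)` and `t := E(d⋆d)`, both `t²d⋆` and `dt²` lie in `[ABA]` (this is why
`t` is squared), so multiplicativity gives `t⁵ = E(t²d⋆)E(d)t² = 0`. -/
theorem map_star_mul_self_sub_map_eq_zero (A : NonUnitalStarSubalgebra ℂ R) (E : R →L[ℂ] R)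
    (hmem : ∀ x, E x ∈ A) (hidem : ∀ a ∈ A, E a = a) (hpos : ∀ x : R, 0 ≤ x → 0 ≤ E x)
    (hleft : ∀ a ∈ A, ∀ x, E (a * x) = a * E x)
    (hright : ∀ a ∈ A, ∀ x, E (x * a) = E x * a)
    (hmult : ∀ x ∈ hereditarySpan A, ∀ y ∈ hereditarySpan A, E (x * y) = E x * E y)
    {a : R} (ha : a ∈ A) (x : R) :
    E (star (a * x - E (a * x)) * (a * x - E (a * x))) = 0 := by
  set c := E (a * x)
  have hc : c ∈ A := hmem _
  set d := a * x - c
  set t := E (star d * d)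
  have ht : t ∈ A := hmem _
  have htt : t * t ∈ A := mul_mem ht ht
  have ht_sa : IsSelfAdjoint t := .of_nonneg (hpos _ (star_mul_self_nonneg d))
  have hEd : E d = 0 := by simp only [d, map_sub, hidem c hc]; exact sub_self c
  have hleft_mem : t * t * star d ∈ hereditarySpan A := by
    have : t * t * star d = t * (t * star x) * star a - t * t * star c := by
      simp only [d, star_sub, star_mul, mul_sub, mul_assoc]
    rw [this]
    exact sub_mem_hereditarySpan A (mul_mul_mem_hereditarySpan A ht (star_mem ha) _)
      (mul_mul_mem_hereditarySpan A ht (star_mem hc) _)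
  have hright_mem : d * (t * t) ∈ hereditarySpan A := by
    have : d * (t * t) = a * (x * t) * t - c * t * t := by
      simp only [d, sub_mul, mul_assoc]
    rw [this]
    exact sub_mem_hereditarySpan A (mul_mul_mem_hereditarySpan A ha ht _)
      (mul_mul_mem_hereditarySpan A hc ht _)
  refine ht_sa.eq_zero_of_mul_self_mul_mul_self_eq_zero ?_
  calc t * t * t * (t * t) = E (t * t * (star d * d * (t * t))) := by
        rw [hleft _ htt, hright _ htt, mul_assoc (t * t)]
    _ = E (t * t * star d) * E (d * (t * t)) := by
        rw [← hmult _ hleft_mem _ hright_mem]; simp only [mul_assoc]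
    _ = 0 := by rw [hright _ htt, hEd, zero_mul, mul_zero]

end ConditionalExpectation

namespace Stinespring

variable {R : Type*} [NonUnitalNormedRing R] [StarRing R] [NormedSpace ℂ R]
  {A : NonUnitalStarSubalgebra ℂ R} {E : R →L[ℂ] R} {hmem : ∀ x, E x ∈ A}
  {σ : A →⋆ₙₐ[ℂ] (H →L[ℂ] H)} {π : R →⋆ₙₐ[ℂ] (K →L[ℂ] K)} {V : H →L[ℂ] K}

theorem map_eq_adjoint_comp_comp (hidem : ∀ a ∈ A, E a = a)
    (hSt : ∀ x, σ ⟨E x, hmem x⟩ = adjoint V ∘L (π x ∘L V)) (a : A) :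
    σ a = adjoint V ∘L (π a ∘L V) := by
  rw [← hSt]
  exact congrArg σ (Subtype.ext (hidem a a.2)).symm

theorem adjoint_comp_map_eq (hleft : ∀ a ∈ A, ∀ x, E (a * x) = a * E x)
    (hSt : ∀ x, σ ⟨E x, hmem x⟩ = adjoint V ∘L (π x ∘L V))
    (hmin : (Submodule.span ℂ {v : K | ∃ (x : R) (ξ : H), v = π x (V ξ)}).topologicalClosure = ⊤)
    (a : A) : adjoint V ∘L π a = σ a ∘L adjoint V := by
  refine ContinuousLinearMap.ext_on (Submodule.dense_iff_topologicalClosure_eq_top.mpr hmin) ?_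
  rintro - ⟨x, ξ, rfl⟩
  have hmul : (⟨E (a * x), hmem _⟩ : A) = a * ⟨E x, hmem x⟩ := Subtype.ext (hleft a a.2 x)
  have := congr($(hSt (a * x)) ξ)
  rw [hmul, map_mul] at this
  simpa [hSt] using this.symm

theorem apply_map_apply (hleft : ∀ a ∈ A, ∀ x, E (a * x) = a * E x)
    (hSt : ∀ x, σ ⟨E x, hmem x⟩ = adjoint V ∘L (π x ∘L V))
    (hmin : (Submodule.span ℂ {v : K | ∃ (x : R) (ξ : H), v = π x (V ξ)}).topologicalClosure = ⊤)
    (a : A) (ξ : H) : V (σ a ξ) = π a (V ξ) := by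
  have := congrArg adjoint (adjoint_comp_map_eq hleft hSt hmin (star a))
  simp only [adjoint_comp, StarMemClass.coe_star, map_star, ← star_eq_adjoint,
    star_star, adjoint_adjoint] at this
  exact congr($this.symm ξ)

theorem adjoint_comp_self (hidem : ∀ a ∈ A, E a = a)
    (hleft : ∀ a ∈ A, ∀ x, E (a * x) = a * E x)
    (hSt : ∀ x, σ ⟨E x, hmem x⟩ = adjoint V ∘L (π x ∘L V))
    (hnondeg : (Submodule.span ℂ {v : H | ∃ (a : A) (ξ : H), v = σ a ξ}).topologicalClosure = ⊤)
    (hmin : (Submodule.span ℂ {v : K | ∃ (x : R) (ξ : H), v = π x (V ξ)}).topologicalClosure = ⊤) :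
    adjoint V ∘L V = ContinuousLinearMap.id ℂ H := by
  refine ContinuousLinearMap.ext_on (Submodule.dense_iff_topologicalClosure_eq_top.mpr hnondeg) ?_
  rintro - ⟨a, ξ, rfl⟩
  show adjoint V (V (σ a ξ)) = σ a ξ
  rw [apply_map_apply hleft hSt hmin, map_eq_adjoint_comp_comp hidem hSt a]
  rfl

theorem apply_mem_topologicalClosure (hleft : ∀ a ∈ A, ∀ x, E (a * x) = a * E x)
    (hSt : ∀ x, σ ⟨E x, hmem x⟩ = adjoint V ∘L (π x ∘L V))
    (hnondeg : (Submodule.span ℂ {v : H | ∃ (a : A) (ξ : H), v = σ a ξ}).topologicalClosure = ⊤)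
    (hmin : (Submodule.span ℂ {v : K | ∃ (x : R) (ξ : H), v = π x (V ξ)}).topologicalClosure = ⊤)
    (ξ : H) :
    V ξ ∈ (Submodule.span ℂ {v : K | ∃ (a : A) (ζ : K), v = π ↑a ζ}).topologicalClosure := by
  set M := (Submodule.span ℂ {v : K | ∃ (a : A) (ζ : K), v = π ↑a ζ}).topologicalClosure
  suffices h : (⊤ : Submodule ℂ H) ≤ M.comap (V : H →ₗ[ℂ] K) from h Submodule.mem_top
  rw [← hnondeg]
  refine Submodule.topologicalClosure_minimal _ ?_
    ((Submodule.isClosed_topologicalClosure _).preimage V.continuous)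
  rw [Submodule.span_le]
  rintro - ⟨a, ξ, rfl⟩
  show V (σ a ξ) ∈ M
  rw [apply_map_apply hleft hSt hmin]
  exact Submodule.le_topologicalClosure _ (Submodule.subset_span ⟨a, V ξ, rfl⟩)

theorem map_mul_comp_eq [CStarRing R] [PartialOrder R] [StarOrderedRing R]
    (hidem : ∀ a ∈ A, E a = a) (hpos : ∀ x : R, 0 ≤ x → 0 ≤ E x)
    (hleft : ∀ a ∈ A, ∀ x, E (a * x) = a * E x)
    (hright : ∀ a ∈ A, ∀ x, E (x * a) = E x * a)
    (hmult : ∀ x ∈ hereditarySpan A, ∀ y ∈ hereditarySpan A, E (x * y) = E x * E y)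
    (hSt : ∀ x, σ ⟨E x, hmem x⟩ = adjoint V ∘L (π x ∘L V)) {a : R} (ha : a ∈ A) (x : R) :
    π (a * x) ∘L V = π (E (a * x)) ∘L V := by
  set d := a * x - E (a * x)
  have hEd : (⟨E (star d * d), hmem _⟩ : A) = 0 :=
    Subtype.ext (map_star_mul_self_sub_map_eq_zero A E hmem hidem hpos hleft hright hmult ha x)
  have hd : adjoint (π d ∘L V) ∘L (π d ∘L V) = 0 := by
    calc adjoint (π d ∘L V) ∘L (π d ∘L V) = adjoint V ∘L (π (star d * d) ∘L V) := by
          rw [adjoint_comp, map_mul, map_star, star_eq_adjoint]; rfl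
      _ = 0 := by rw [← hSt, hEd, map_zero]
  rw [← sub_eq_zero, ← sub_comp, ← map_sub]
  exact adjoint_comp_self_eq_zero_iff.mp hd

theorem comp_adjoint_comp_map [CStarRing R] [PartialOrder R] [StarOrderedRing R]
    (hidem : ∀ a ∈ A, E a = a) (hpos : ∀ x : R, 0 ≤ x → 0 ≤ E x)
    (hleft : ∀ a ∈ A, ∀ x, E (a * x) = a * E x)
    (hright : ∀ a ∈ A, ∀ x, E (x * a) = E x * a)
    (hmult : ∀ x ∈ hereditarySpan A, ∀ y ∈ hereditarySpan A, E (x * y) = E x * E y)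
    (hSt : ∀ x, σ ⟨E x, hmem x⟩ = adjoint V ∘L (π x ∘L V))
    (hmin : (Submodule.span ℂ {v : K | ∃ (x : R) (ξ : H), v = π x (V ξ)}).topologicalClosure = ⊤)
    (a : A) : V ∘L (adjoint V ∘L π a) = π a := by
  refine ContinuousLinearMap.ext_on (Submodule.dense_iff_topologicalClosure_eq_top.mpr hmin) ?_
  rintro - ⟨x, ξ, rfl⟩
  have hmul : π a (π x (V ξ)) = π (a * x) (V ξ) := by rw [map_mul]; rfl
  have hcomp : adjoint V (π (a * x) (V ξ)) = σ ⟨E (a * x), hmem _⟩ ξ := by rw [hSt]; rfl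
  show V (adjoint V (π a (π x (V ξ)))) = π a (π x (V ξ))
  rw [hmul, hcomp, apply_map_apply hleft hSt hmin]
  exact congr($(map_mul_comp_eq hidem hpos hleft hright hmult hSt a.2 x) ξ).symm

theorem comp_adjoint_apply_of_mem [CStarRing R] [PartialOrder R] [StarOrderedRing R]
    (hidem : ∀ a ∈ A, E a = a) (hpos : ∀ x : R, 0 ≤ x → 0 ≤ E x)
    (hleft : ∀ a ∈ A, ∀ x, E (a * x) = a * E x)
    (hright : ∀ a ∈ A, ∀ x, E (x * a) = E x * a)
    (hmult : ∀ x ∈ hereditarySpan A, ∀ y ∈ hereditarySpan A, E (x * y) = E x * E y)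
    (hSt : ∀ x, σ ⟨E x, hmem x⟩ = adjoint V ∘L (π x ∘L V))
    (hmin : (Submodule.span ℂ {v : K | ∃ (x : R) (ξ : H), v = π x (V ξ)}).topologicalClosure = ⊤)
    {v : K}
    (hv : v ∈ (Submodule.span ℂ {v : K | ∃ (a : A) (ζ : K), v = π ↑a ζ}).topologicalClosure) :
    V (adjoint V v) = v := by
  rw [← SetLike.mem_coe, Submodule.topologicalClosure_coe] at hv
  refine ContinuousLinearMap.eqOn_closure_span (f := V ∘L adjoint V) (g := .id ℂ K) ?_ hv
  rintro - ⟨a, ζ, rfl⟩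
  exact congr($(comp_adjoint_comp_map hidem hpos hleft hright hmult hSt hmin a) ζ)

end Stinespring

theorem stinespring_isometry_projection_general (A : NonUnitalStarSubalgebra ℂ B)
    (E : B →L[ℂ] B) (hmem : ∀ x, E x ∈ A)
    (hidem : ∀ a ∈ A, E a = a) (hpos : ∀ x : B, 0 ≤ x → 0 ≤ E x)
    (hleft : ∀ a ∈ A, ∀ x, E (a * x) = a * E x)
    (hright : ∀ a ∈ A, ∀ x, E (x * a) = E x * a)
    (hmult : ∀ x ∈ hereditarySpan A, ∀ y ∈ hereditarySpan A, E (x * y) = E x * E y)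
    (σ : A →⋆ₙₐ[ℂ] (H →L[ℂ] H))
    (hnondeg : (Submodule.span ℂ
      {v : H | ∃ (a : A) (ξ : H), v = σ a ξ}).topologicalClosure = ⊤)
    (π : B →⋆ₙₐ[ℂ] (K →L[ℂ] K)) (V : H →L[ℂ] K)
    (hSt : ∀ x : B, σ ⟨E x, hmem x⟩ =
      (ContinuousLinearMap.adjoint V).comp ((π x).comp V))
    (hmin : (Submodule.span ℂ
      {v : K | ∃ (x : B) (ξ : H), v = π x (V ξ)}).topologicalClosure = ⊤) :
    (ContinuousLinearMap.adjoint V).comp V = ContinuousLinearMap.id ℂ H ∧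
    IsSelfAdjoint (V.comp (ContinuousLinearMap.adjoint V)) ∧
    (∀ v : K, V (ContinuousLinearMap.adjoint V v) ∈
      (Submodule.span ℂ {v : K | ∃ (a : A) (ξ : K), v = π ↑a ξ}).topologicalClosure) ∧
    (∀ v ∈ (Submodule.span ℂ
        {v : K | ∃ (a : A) (ξ : K), v = π ↑a ξ}).topologicalClosure,
      V (ContinuousLinearMap.adjoint V v) = v) := by
  refine ⟨Stinespring.adjoint_comp_self hidem hleft hSt hnondeg hmin, ?_,
    fun v ↦ Stinespring.apply_mem_topologicalClosure hleft hSt hnondeg hmin _,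
    fun v hv ↦ Stinespring.comp_adjoint_apply_of_mem hidem hpos hleft hright hmult hSt hmin hv⟩
  rw [IsSelfAdjoint, star_eq_adjoint, adjoint_comp, adjoint_adjoint]

/-- Let `E : B → A` be a conditional expectation which is multiplicative on
`[ABA]` and has `ker E = {0}`.  Realize `A ⊆ B(H)` nondegenerately via `σ`, and
let `E(x) = V* π(x) V` be a minimal Stinespring decomposition.  Then `V` is an
isometry and `V V*` is the orthogonal projection onto `[π(A)K]`. -/
theorem stinespring_isometry_projection (A : NonUnitalStarSubalgebra ℂ B)
    (hA : IsClosed (A : Set B)) (E : B →L[ℂ] B) (hmem : ∀ x, E x ∈ A)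
    (hidem : ∀ a ∈ A, E a = a) (hpos : ∀ x : B, 0 ≤ x → 0 ≤ E x)
    (hleft : ∀ a ∈ A, ∀ x, E (a * x) = a * E x)
    (hright : ∀ a ∈ A, ∀ x, E (x * a) = E x * a)
    (hmult : ∀ x ∈ hereditarySpan A, ∀ y ∈ hereditarySpan A, E (x * y) = E x * E y)
    (hker : ∀ x : B, (∀ b c : B, E (b * x * c) = 0) → x = 0)
    (σ : A →⋆ₙₐ[ℂ] (H →L[ℂ] H)) (hσinj : Function.Injective σ)
    (hnondeg : (Submodule.span ℂ
      {v : H | ∃ (a : A) (ξ : H), v = σ a ξ}).topologicalClosure = ⊤)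
    (π : B →⋆ₙₐ[ℂ] (K →L[ℂ] K)) (V : H →L[ℂ] K)
    (hSt : ∀ x : B, σ ⟨E x, hmem x⟩ =
      (ContinuousLinearMap.adjoint V).comp ((π x).comp V))
    (hmin : (Submodule.span ℂ
      {v : K | ∃ (x : B) (ξ : H), v = π x (V ξ)}).topologicalClosure = ⊤) :
    (ContinuousLinearMap.adjoint V).comp V = ContinuousLinearMap.id ℂ H ∧
    IsSelfAdjoint (V.comp (ContinuousLinearMap.adjoint V)) ∧
    (∀ v : K, V (ContinuousLinearMap.adjoint V v) ∈
      (Submodule.span ℂ {v : K | ∃ (a : A) (ξ : K), v = π ↑a ξ}).topologicalClosure) ∧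
    (∀ v ∈ (Submodule.span ℂ
        {v : K | ∃ (a : A) (ξ : K), v = π ↑a ξ}).topologicalClosure,
      V (ContinuousLinearMap.adjoint V v) = v) :=
  stinespring_isometry_projection_general A E hmem hidem hpos hleft hright hmult σ hnondeg π V hSt
    hmin
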